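/- arXiv:2112.02440 — 2 statements merged into one kernel-verified Lean document; each statement's English description precedes it below -/
import Mathlib

section
/- Let η > 0, θ ≥ 0, α ∈ (1,2), b ∈ ℝ, σ ∈ ℝ, and define the tempered α-stable branching mechanism Φ(x) = −bx + (1/2)(σx)² + ∫₀^∞ (e^{xz} − 1 − xz) π(dz), where π(dz) = (1/Γ(−α)) η^α e^{−(θ/η)z} z^{−1−α} dz on (0,∞). Then for all x ≤ θ/η, Φ(x) = −bx + (1/2)σ²x² + (θ − ηx)^α − θ^α + α θ^{α−1} η x. -/
open MeasureTheory Real Set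

open Filter Topology

/-!
Put `c = θ / η` and `u = c - x ≥ 0`. Since `e^{xz} e^{-cz} = e^{-uz}`, the integrand is
`((e^{-uz} - 1 + uz) - (e^{-cz} - 1 + cz) + x z (1 - e^{-cz})) z^{-1-α}`, and the substitution
`z ↦ uz` reduces everything to the two constants `∫₀^∞ (e^{-z} - 1 + z) z^{-1-α} dz = Γ(-α)` and
`∫₀^∞ (1 - e^{-z}) z^{-α} dz = α Γ(-α)`. Integrating by parts twice turns these into `Γ(2 - α)`,
and the recurrence gives `Γ(2 - α) = α (α - 1) Γ(-α)`.
-/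

lemma abs_exp_neg_sub_one_add_le_sq {z : ℝ} (hz : z ∈ Icc (0:ℝ) 1) :
    |exp (-z) - 1 + z| ≤ z ^ 2 := by
  simpa [sub_neg_eq_add, abs_of_nonneg hz.1] using
    abs_exp_sub_one_sub_id_le (x := -z) (by simpa [abs_of_nonneg hz.1] using hz.2)

lemma abs_exp_neg_sub_one_add_le {z : ℝ} (hz : 0 ≤ z) : |exp (-z) - 1 + z| ≤ z := by
  rw [abs_of_nonneg (by linarith [add_one_le_exp (-z)])]
  linarith [exp_le_one_iff.mpr (neg_nonpos.mpr hz)]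

lemma abs_one_sub_exp_neg_le {z : ℝ} (hz : 0 ≤ z) : |1 - exp (-z)| ≤ z := by
  rw [abs_of_nonneg (sub_nonneg.mpr (exp_le_one_iff.mpr (neg_nonpos.mpr hz)))]
  linarith [add_one_le_exp (-z)]

lemma abs_one_sub_exp_neg_le_one {z : ℝ} (hz : 0 ≤ z) : |1 - exp (-z)| ≤ 1 := by
  rw [abs_of_nonneg (sub_nonneg.mpr (exp_le_one_iff.mpr (neg_nonpos.mpr hz)))]
  linarith [exp_pos (-z)]

lemma abs_mul_rpow_le_rpow_add_natCast {g : ℝ → ℝ} {z : ℝ} (hz : 0 < z) (s : ℝ) {n : ℕ}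
    (hg : |g z| ≤ z ^ n) : |g z * z ^ s| ≤ z ^ (s + n) := by
  rw [abs_mul, abs_of_pos (rpow_pos_of_pos hz s), rpow_add_natCast hz.ne', mul_comm]
  exact mul_le_mul_of_nonneg_left hg (rpow_pos_of_pos hz s).le

lemma integrableOn_Ioi_mul_rpow {g : ℝ → ℝ} {s : ℝ} {m n : ℕ} (hg : ContinuousOn g (Ioi 0))
    (hm : -1 < s + m) (hn : s + n < -1)
    (hg₀ : ∀ z ∈ Ioc (0:ℝ) 1, |g z| ≤ z ^ m) (hg₁ : ∀ z ∈ Ioi (1:ℝ), |g z| ≤ z ^ n) :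
    IntegrableOn (fun z => g z * z ^ s) (Ioi 0) := by
  have hcont : ContinuousOn (fun z => g z * z ^ s) (Ioi 0) :=
    hg.mul fun z hz => (continuousAt_rpow_const z s (Or.inl (ne_of_gt hz))).continuousWithinAt
  rw [← Ioc_union_Ioi_eq_Ioi zero_le_one]
  refine IntegrableOn.union ?_ ?_
  · have hdom : IntegrableOn (fun z : ℝ => z ^ (s + m)) (Ioc 0 1) := by
      simpa [intervalIntegrable_iff_integrableOn_Ioc_of_le zero_le_one] using
        intervalIntegral.intervalIntegrable_rpow' (a := 0) (b := 1) hm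
    refine hdom.mono' ((hcont.mono Ioc_subset_Ioi_self).aestronglyMeasurable measurableSet_Ioc) ?_
    filter_upwards [ae_restrict_mem measurableSet_Ioc] with z hz
    exact abs_mul_rpow_le_rpow_add_natCast hz.1 s (hg₀ z hz)
  · refine (integrableOn_Ioi_rpow_of_lt hn one_pos).mono'
      ((hcont.mono (Ioi_subset_Ioi zero_le_one)).aestronglyMeasurable measurableSet_Ioi) ?_
    filter_upwards [ae_restrict_mem measurableSet_Ioi] with z hz
    exact abs_mul_rpow_le_rpow_add_natCast (zero_lt_one.trans hz) s (hg₁ z hz)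

lemma tendsto_mul_rpow_nhdsGT_zero {g : ℝ → ℝ} {s : ℝ} {m : ℕ} (hm : 0 < s + m)
    (hg₀ : ∀ z ∈ Ioc (0:ℝ) 1, |g z| ≤ z ^ m) :
    Tendsto (fun z => g z * z ^ s) (𝓝[>] 0) (𝓝 0) := by
  have hpow : Tendsto (fun z : ℝ => z ^ (s + m)) (𝓝[>] 0) (𝓝 0) := by
    simpa [zero_rpow hm.ne'] using
      ((continuousAt_rpow_const 0 _ (Or.inr hm.le)).tendsto).mono_left nhdsWithin_le_nhds
  refine squeeze_zero_norm' ?_ hpow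
  filter_upwards [Ioc_mem_nhdsGT zero_lt_one] with z hz
  exact abs_mul_rpow_le_rpow_add_natCast hz.1 s (hg₀ z hz)

lemma tendsto_mul_rpow_atTop {g : ℝ → ℝ} {s : ℝ} {n : ℕ} (hn : s + n < 0)
    (hg₁ : ∀ z ∈ Ioi (1:ℝ), |g z| ≤ z ^ n) :
    Tendsto (fun z => g z * z ^ s) atTop (𝓝 0) := by
  have hpow : Tendsto (fun z : ℝ => z ^ (s + n)) atTop (𝓝 0) := by
    simpa using tendsto_rpow_neg_atTop (neg_pos.mpr hn)
  refine squeeze_zero_norm' ?_ hpow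
  filter_upwards [eventually_gt_atTop 1] with z hz
  exact abs_mul_rpow_le_rpow_add_natCast (zero_lt_one.trans hz) s (hg₁ z hz)

lemma integral_Ioi_mul_rpow_sub_one {g g' : ℝ → ℝ} {s : ℝ} (hs : s ≠ 0)
    (hg : ∀ z ∈ Ioi (0:ℝ), HasDerivAt g (g' z) z)
    (hint : IntegrableOn (fun z => g z * z ^ (s - 1)) (Ioi 0))
    (hint' : IntegrableOn (fun z => g' z * z ^ s) (Ioi 0))
    (h₀ : Tendsto (fun z => g z * z ^ s) (𝓝[>] 0) (𝓝 0))
    (h₁ : Tendsto (fun z => g z * z ^ s) atTop (𝓝 0)) :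
    ∫ z in Ioi 0, g z * z ^ (s - 1) = -(∫ z in Ioi 0, g' z * z ^ s) / s := by
  have hv : ∀ z ∈ Ioi (0:ℝ), HasDerivAt (fun z => z ^ s / s) (z ^ (s - 1)) z := fun z hz =>
    ((hasDerivAt_rpow_const (Or.inl (ne_of_gt hz))).div_const s).congr_deriv
      (mul_div_cancel_left₀ _ hs)
  have := integral_Ioi_mul_deriv_eq_deriv_mul hg hv hint
    (by simp only [Pi.mul_def, ← mul_div_assoc]; exact hint'.div_const s)
    (by simpa only [Pi.mul_def, mul_div_assoc, zero_div] using h₀.div_const s)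
    (by simpa only [Pi.mul_def, mul_div_assoc, zero_div] using h₁.div_const s)
  simp only [← mul_div_assoc, integral_div] at this
  rw [this]
  ring

lemma rpow_eq_rpow_neg_mul_mul_rpow {u z : ℝ} (hu : 0 < u) (hz : 0 ≤ z) (p : ℝ) :
    z ^ p = u ^ (-p) * (u * z) ^ p := by
  rw [mul_rpow hu.le hz, ← mul_assoc, ← rpow_add hu, neg_add_cancel, rpow_zero, one_mul]

lemma integral_Ioi_comp_mul_mul_rpow (f : ℝ → ℝ) (p : ℝ) {u : ℝ} (hu : 0 < u) :
    ∫ z in Ioi 0, f (u * z) * z ^ p = u ^ (-1 - p) * ∫ z in Ioi 0, f z * z ^ p := by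
  rw [setIntegral_congr_fun measurableSet_Ioi fun z hz => by
      rw [rpow_eq_rpow_neg_mul_mul_rpow hu (le_of_lt hz) p, mul_left_comm],
    integral_const_mul, integral_comp_mul_left_Ioi (fun w => f w * w ^ p) 0 hu, mul_zero,
    smul_eq_mul, ← mul_assoc, ← rpow_neg_one, ← rpow_add hu, neg_add_eq_sub]

lemma integrableOn_Ioi_comp_mul_mul_rpow {f : ℝ → ℝ} {p u : ℝ}
    (hf : IntegrableOn (fun z => f z * z ^ p) (Ioi 0)) (hu : 0 < u) :
    IntegrableOn (fun z => f (u * z) * z ^ p) (Ioi 0) := by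
  have : IntegrableOn (fun z => u ^ (-p) * (f (u * z) * (u * z) ^ p)) (Ioi 0) :=
    ((integrableOn_Ioi_comp_mul_left_iff (fun w => f w * w ^ p) 0 hu).mpr
      (by rwa [mul_zero])).const_mul _
  refine this.congr_fun (fun z hz => ?_) measurableSet_Ioi
  rw [rpow_eq_rpow_neg_mul_mul_rpow hu (le_of_lt hz) p, mul_left_comm]

section
variable {α : ℝ}

lemma integrableOn_exp_neg_sub_one_add_mul_rpow (hα : α ∈ Ioo 1 2) :
    IntegrableOn (fun z => (exp (-z) - 1 + z) * z ^ (-1 - α)) (Ioi 0) :=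
  integrableOn_Ioi_mul_rpow (g := fun z => exp (-z) - 1 + z) (m := 2) (n := 1)
    (by fun_prop) (by push_cast; linarith [hα.2]) (by push_cast; linarith [hα.1])
    (fun z hz => abs_exp_neg_sub_one_add_le_sq ⟨hz.1.le, hz.2⟩)
    (fun z hz => by simpa using abs_exp_neg_sub_one_add_le (zero_le_one.trans hz.le))

lemma integrableOn_one_sub_exp_neg_mul_rpow (hα : α ∈ Ioo 1 2) :
    IntegrableOn (fun z => (1 - exp (-z)) * z ^ (-α)) (Ioi 0) :=
  integrableOn_Ioi_mul_rpow (g := fun z => 1 - exp (-z)) (m := 1) (n := 0)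
    (by fun_prop) (by push_cast; linarith [hα.2]) (by push_cast; linarith [hα.1])
    (fun z hz => by simpa using abs_one_sub_exp_neg_le hz.1.le)
    (fun z hz => by simpa using abs_one_sub_exp_neg_le_one (zero_le_one.trans hz.le))

lemma integral_one_sub_exp_neg_mul_rpow (hα : α ∈ Ioo 1 2) :
    ∫ z in Ioi 0, (1 - exp (-z)) * z ^ (-α) = α * Gamma (-α) := by
  have hα₁ : 1 - α ≠ 0 := by linarith [hα.1]
  have hderiv : ∀ z ∈ Ioi (0:ℝ), HasDerivAt (fun z => 1 - exp (-z)) (exp (-z)) z := fun z _ => by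
    simpa using ((hasDerivAt_neg z).exp).const_sub 1
  have hGamma : Gamma (2 - α) = ∫ z in Ioi 0, exp (-z) * z ^ (1 - α) := by
    rw [Gamma_eq_integral (by linarith [hα.2]), show 2 - α - 1 = 1 - α by ring]
  have hparts := integral_Ioi_mul_rpow_sub_one hα₁ hderiv
    (by simpa only [show 1 - α - 1 = -α by ring] using integrableOn_one_sub_exp_neg_mul_rpow hα)
    (by simpa only [show 2 - α - 1 = 1 - α by ring] using
      GammaIntegral_convergent (s := 2 - α) (by linarith [hα.2]))
    (tendsto_mul_rpow_nhdsGT_zero (m := 1) (by push_cast; linarith [hα.2])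
      fun z hz => by simpa using abs_one_sub_exp_neg_le hz.1.le)
    (tendsto_mul_rpow_atTop (n := 0) (by push_cast; linarith [hα.1])
      fun z hz => by simpa using abs_one_sub_exp_neg_le_one (zero_le_one.trans hz.le))
  rw [show 1 - α - 1 = -α by ring, ← hGamma, show 2 - α = (-α + 1) + 1 by ring,
    Gamma_add_one (by linarith [hα.1]), Gamma_add_one (by linarith [hα.1])] at hparts
  rw [hparts]
  field_simp
  ring

lemma integral_exp_neg_sub_one_add_mul_rpow (hα : α ∈ Ioo 1 2) :
    ∫ z in Ioi 0, (exp (-z) - 1 + z) * z ^ (-1 - α) = Gamma (-α) := by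
  have hα₀ : -α ≠ 0 := by linarith [hα.1]
  have hderiv : ∀ z ∈ Ioi (0:ℝ),
      HasDerivAt (fun z => exp (-z) - 1 + z) (1 - exp (-z)) z := fun z _ =>
    (((hasDerivAt_neg z).exp.sub_const 1).add (hasDerivAt_id' z)).congr_deriv (by ring)
  have hparts := integral_Ioi_mul_rpow_sub_one hα₀ hderiv
    (by simpa only [show -α - 1 = -1 - α by ring] using
      integrableOn_exp_neg_sub_one_add_mul_rpow hα)
    (integrableOn_one_sub_exp_neg_mul_rpow hα)
    (tendsto_mul_rpow_nhdsGT_zero (m := 2) (by push_cast; linarith [hα.2])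
      fun z hz => abs_exp_neg_sub_one_add_le_sq ⟨hz.1.le, hz.2⟩)
    (tendsto_mul_rpow_atTop (n := 1) (by push_cast; linarith [hα.1])
      fun z hz => by simpa using abs_exp_neg_sub_one_add_le (zero_le_one.trans hz.le))
  rw [show -α - 1 = -1 - α by ring, integral_one_sub_exp_neg_mul_rpow hα] at hparts
  rw [hparts, neg_div_neg_eq, mul_div_cancel_left₀ _ (by linarith [hα.1])]

lemma integrableOn_exp_neg_mul_sub_one_add_mul_rpow (hα : α ∈ Ioo 1 2) {u : ℝ} (hu : 0 ≤ u) :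
    IntegrableOn (fun z => (exp (-(u * z)) - 1 + u * z) * z ^ (-1 - α)) (Ioi 0) := by
  rcases hu.eq_or_lt with rfl | hu
  · simp
  · exact integrableOn_Ioi_comp_mul_mul_rpow (integrableOn_exp_neg_sub_one_add_mul_rpow hα) hu

lemma integrableOn_one_sub_exp_neg_mul_mul_rpow (hα : α ∈ Ioo 1 2) {u : ℝ} (hu : 0 ≤ u) :
    IntegrableOn (fun z => (1 - exp (-(u * z))) * z ^ (-α)) (Ioi 0) := by
  rcases hu.eq_or_lt with rfl | hu
  · simp
  · exact integrableOn_Ioi_comp_mul_mul_rpow (integrableOn_one_sub_exp_neg_mul_rpow hα) hu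

lemma integral_exp_neg_mul_sub_one_add_mul_rpow (hα : α ∈ Ioo 1 2) {u : ℝ} (hu : 0 ≤ u) :
    ∫ z in Ioi 0, (exp (-(u * z)) - 1 + u * z) * z ^ (-1 - α) = Gamma (-α) * u ^ α := by
  rcases hu.eq_or_lt with rfl | hu
  · simp [zero_rpow (by linarith [hα.1] : α ≠ 0)]
  · rw [integral_Ioi_comp_mul_mul_rpow (fun z => exp (-z) - 1 + z) (-1 - α) hu,
      integral_exp_neg_sub_one_add_mul_rpow hα, show -1 - (-1 - α) = α by ring, mul_comm]

lemma integral_one_sub_exp_neg_mul_mul_rpow (hα : α ∈ Ioo 1 2) {u : ℝ} (hu : 0 ≤ u) :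
    ∫ z in Ioi 0, (1 - exp (-(u * z))) * z ^ (-α) = α * Gamma (-α) * u ^ (α - 1) := by
  rcases hu.eq_or_lt with rfl | hu
  · simp [zero_rpow (by linarith [hα.1] : α - 1 ≠ 0)]
  · rw [integral_Ioi_comp_mul_mul_rpow (fun z => 1 - exp (-z)) (-α) hu,
      integral_one_sub_exp_neg_mul_rpow hα, show -1 - -α = α - 1 by ring, mul_comm]

theorem integral_exp_mul_sub_one_sub_mul_mul_exp_neg_mul_rpow (hα : α ∈ Ioo 1 2) {c x : ℝ}
    (hc : 0 ≤ c) (hx : x ≤ c) :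
    ∫ z in Ioi 0, (exp (x * z) - 1 - x * z) * (exp (-c * z) * z ^ (-1 - α))
      = Gamma (-α) * ((c - x) ^ α - c ^ α + α * c ^ (α - 1) * x) := by
  have hu : 0 ≤ c - x := sub_nonneg.mpr hx
  have hsplit : ∀ z ∈ Ioi (0:ℝ),
      (exp (x * z) - 1 - x * z) * (exp (-c * z) * z ^ (-1 - α))
        = ((exp (-((c - x) * z)) - 1 + (c - x) * z) * z ^ (-1 - α)
          - (exp (-(c * z)) - 1 + c * z) * z ^ (-1 - α))
          + x * ((1 - exp (-(c * z))) * z ^ (-α)) := fun z hz => by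
    rw [show -α = -1 - α + 1 by ring, rpow_add_one (ne_of_gt hz), neg_mul,
      show -((c - x) * z) = x * z + -(c * z) by ring, exp_add]
    ring
  have hint_u := integrableOn_exp_neg_mul_sub_one_add_mul_rpow hα hu
  have hint_c := integrableOn_exp_neg_mul_sub_one_add_mul_rpow hα hc
  rw [setIntegral_congr_fun measurableSet_Ioi hsplit, integral_add ?_ ?_,
    integral_sub hint_u hint_c, integral_const_mul,
    integral_exp_neg_mul_sub_one_add_mul_rpow hα hu, integral_exp_neg_mul_sub_one_add_mul_rpow hα hc,
    integral_one_sub_exp_neg_mul_mul_rpow hα hc]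
  · ring
  · exact hint_u.sub hint_c
  · exact (integrableOn_one_sub_exp_neg_mul_mul_rpow hα hc).const_mul x

end

/-- Closed form of the tempered α-stable branching mechanism: for all x ≤ θ/η,
−bx + σ²x²/2 + ∫₀^∞ (e^{xz} − 1 − xz) (1/Γ(−α)) η^α e^{−(θ/η)z} z^{−1−α} dz
  = −bx + σ²x²/2 + (θ − ηx)^α − θ^α + αθ^{α−1}ηx. -/
theorem tempered_stable_branching_closed_form
    (η θ α b σ : ℝ) (hη : 0 < η) (hθ : 0 ≤ θ) (hα : α ∈ Set.Ioo (1:ℝ) 2) :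
    ∀ x : ℝ, x ≤ θ / η →
      -b * x + σ ^ 2 / 2 * x ^ 2 +
        ∫ z in Set.Ioi (0:ℝ),
          (Real.exp (x * z) - 1 - x * z) *
            ((1 / Real.Gamma (-α)) * η ^ α * Real.exp (-(θ / η) * z) * z ^ (-1 - α))
      = -b * x + σ ^ 2 / 2 * x ^ 2 + (θ - η * x) ^ α - θ ^ α + α * θ ^ (α - 1) * η * x := by
  intro x hx
  have hΓ : Gamma (-α) ≠ 0 := Gamma_ne_zero fun m hm => by
    obtain ⟨h₁, h₂⟩ := hα
    rw [neg_inj.mp hm] at h₁ h₂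
    norm_cast at h₁ h₂
    omega
  have hdiff : θ / η - x = (θ - η * x) / η := by field_simp
  have hθx : 0 ≤ θ - η * x := by rwa [le_div_iff₀' hη, ← sub_nonneg] at hx
  calc _ = -b * x + σ ^ 2 / 2 * x ^ 2 + η ^ α / Gamma (-α) *
        ∫ z in Ioi 0, (exp (x * z) - 1 - x * z) * (exp (-(θ / η) * z) * z ^ (-1 - α)) := by
        rw [← integral_const_mul]
        congr 2 with z
        ring
    _ = -b * x + σ ^ 2 / 2 * x ^ 2 +
        η ^ α * ((θ / η - x) ^ α - (θ / η) ^ α + α * (θ / η) ^ (α - 1) * x) := by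
        rw [integral_exp_mul_sub_one_sub_mul_mul_exp_neg_mul_rpow hα (by positivity) hx,
          ← mul_assoc, div_mul_cancel₀ _ hΓ]
    _ = _ := by
        rw [hdiff, div_rpow hθx hη.le, div_rpow hθ hη.le, div_rpow hθ hη.le,
          show η ^ α = η ^ (α - 1) * η by rw [← rpow_add_one hη.ne', sub_add_cancel]]
        field_simp
        ring
end

section
/- Let f : ℝ → ℝ be integrable on [a,b] ⊂ ℝ with a < 0 < b, and consider the cosine-series coefficient B_k = (2/(b−a)) ∫₀^b (e^x − 1) cos(kπ(x−a)/(b−a)) dx for k ≥ 1. Then B_k = (2/(b−a)) [ (1/(1 + (kπ/(b−a))²)) ( (−1)^k e^b − cos(kπa/(b−a)) + (kπ/(b−a)) sin(kπa/(b−a)) ) − ((b−a)/(kπ)) sin(kπa/(b−a)) ]. -/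
/-!
An antiderivative of `e^x cos(ω(x - c))` is `e^x (cos(ω(x - c)) + ω sin(ω(x - c))) / (1 + ω²)`
(integrate by parts twice), and one of `cos(ω(x - c))` is `sin(ω(x - c)) / ω`. With
`ω = kπ/(b - a)` and `c = a`, the phase at the upper endpoint `x = b` is exactly `kπ`, where
cosine is `(-1)^k` and sine vanishes.
-/

open Real MeasureTheory intervalIntegral

theorem hasDerivAt_exp_mul_cos_sin_mul_sub (ω c x : ℝ) :
    HasDerivAt
      (fun x => exp x * (cos (ω * (x - c)) + ω * sin (ω * (x - c))) / (1 + ω ^ 2))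
      (exp x * cos (ω * (x - c))) x := by
  have hu : HasDerivAt (fun x => ω * (x - c)) ω x := by
    simpa using ((hasDerivAt_id x).sub_const c).const_mul ω
  have hcos := (hasDerivAt_cos (ω * (x - c))).comp x hu
  have hsin := (hasDerivAt_sin (ω * (x - c))).comp x hu
  refine (((hasDerivAt_exp x).mul (hcos.add (hsin.const_mul ω))).div_const _).congr_deriv ?_
  simp only [Function.comp_apply, Pi.add_apply]
  field_simp
  ring

theorem integral_exp_mul_cos_mul_sub (ω c u v : ℝ) :
    ∫ x in u..v, exp x * cos (ω * (x - c)) =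
      exp v * (cos (ω * (v - c)) + ω * sin (ω * (v - c))) / (1 + ω ^ 2)
        - exp u * (cos (ω * (u - c)) + ω * sin (ω * (u - c))) / (1 + ω ^ 2) :=
  integral_eq_sub_of_hasDerivAt (fun x _ => hasDerivAt_exp_mul_cos_sin_mul_sub ω c x)
    (by apply Continuous.intervalIntegrable; fun_prop)

theorem integral_cos_mul_sub {ω : ℝ} (hω : ω ≠ 0) (c u v : ℝ) :
    ∫ x in u..v, cos (ω * (x - c)) = (sin (ω * (v - c)) - sin (ω * (u - c))) / ω := by
  simp only [mul_sub, integral_comp_mul_sub (fun x => cos x) hω, integral_cos,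
    smul_eq_mul, inv_mul_eq_div, sub_div]

theorem integral_exp_sub_one_mul_cos_mul_sub {ω : ℝ} (hω : ω ≠ 0) (c u v : ℝ) :
    ∫ x in u..v, (exp x - 1) * cos (ω * (x - c)) =
      exp v * (cos (ω * (v - c)) + ω * sin (ω * (v - c))) / (1 + ω ^ 2)
        - exp u * (cos (ω * (u - c)) + ω * sin (ω * (u - c))) / (1 + ω ^ 2)
        - (sin (ω * (v - c)) - sin (ω * (u - c))) / ω := by
  simp only [sub_one_mul]
  rw [intervalIntegral.integral_sub (by apply Continuous.intervalIntegrable; fun_prop)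
    (by apply Continuous.intervalIntegrable; fun_prop),
    integral_exp_mul_cos_mul_sub, integral_cos_mul_sub hω]

theorem cos_method_call_coefficients_general
    (a b : ℝ) (ha : a < 0) (hb : 0 < b) :
    ∀ k : ℕ, 1 ≤ k →
      (2 / (b - a)) * ∫ x in (0:ℝ)..b,
          (Real.exp x - 1) * Real.cos ((k : ℝ) * Real.pi * (x - a) / (b - a))
        = (2 / (b - a)) *
            ((1 / (1 + ((k : ℝ) * Real.pi / (b - a)) ^ 2)) *
              ((-1 : ℝ) ^ k * Real.exp b - Real.cos ((k : ℝ) * Real.pi * a / (b - a))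
                + ((k : ℝ) * Real.pi / (b - a)) * Real.sin ((k : ℝ) * Real.pi * a / (b - a)))
              - ((b - a) / ((k : ℝ) * Real.pi)) * Real.sin ((k : ℝ) * Real.pi * a / (b - a))) := by
  intro k hk
  have hba : b - a ≠ 0 := by linarith
  have hkπ : (k : ℝ) * π ≠ 0 := by positivity
  set ω := (k : ℝ) * π / (b - a) with hω
  have hω0 : ω ≠ 0 := div_ne_zero hkπ hba
  have hphase (x : ℝ) : (k : ℝ) * π * (x - a) / (b - a) = ω * (x - a) := by ring
  have hright : ω * (b - a) = k * π := div_mul_cancel₀ _ hba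
  have hleft : ω * (0 - a) = -((k : ℝ) * π * a / (b - a)) := by ring
  simp only [hphase]
  rw [integral_exp_sub_one_mul_cos_mul_sub hω0, hright, hleft, cos_nat_mul_pi, sin_nat_mul_pi,
    cos_neg, sin_neg, exp_zero, hω]
  field_simp
  ring

/-- Closed-form evaluation of the COS-method payoff coefficients for a European call:
for a < 0 < b and k ≥ 1,
B_k = (2/(b−a)) ∫₀^b (e^x − 1) cos(kπ(x−a)/(b−a)) dx equals the stated closed form. -/
theorem cos_method_call_coefficients
    (a b : ℝ) (ha : a < 0) (hb : 0 < b)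
    (f : ℝ → ℝ) (hf : IntegrableOn f (Set.Icc a b)) :
    ∀ k : ℕ, 1 ≤ k →
      (2 / (b - a)) * ∫ x in (0:ℝ)..b,
          (Real.exp x - 1) * Real.cos ((k : ℝ) * Real.pi * (x - a) / (b - a))
        = (2 / (b - a)) *
            ((1 / (1 + ((k : ℝ) * Real.pi / (b - a)) ^ 2)) *
              ((-1 : ℝ) ^ k * Real.exp b - Real.cos ((k : ℝ) * Real.pi * a / (b - a))
                + ((k : ℝ) * Real.pi / (b - a)) * Real.sin ((k : ℝ) * Real.pi * a / (b - a)))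
              - ((b - a) / ((k : ℝ) * Real.pi)) * Real.sin ((k : ℝ) * Real.pi * a / (b - a))) :=
  cos_method_call_coefficients_general a b ha hb
end
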